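/- For μ_k ≤ μ* in [0, β], the identity g(μ_k) = (‖(A-μ_kI)⁻¹(A-μ*I)⁻¹b‖₁ - 1)(μ_k - μ*) holds, where g(μ) = ‖(A-μI)⁻¹b‖₁ - μ and μ* = ‖(A-μ*I)⁻¹b‖₁. -/

import Mathlib

/-!
For `μ ≤ β` the matrix `A - μI = (2 - σ - μ)I - M` dominates the column sums of `M`, so it is
inverse-positive: `(A - μI)x ≥ 0` forces `x ≥ 0`. Hence `(A - μI)⁻¹` exists and preserves
nonnegativity, every vector in the identity is nonnegative, and `‖·‖₁` is additive on them.
Applying the resolvent identity `R(μk) - R(μs) = (μk - μs) R(μk) R(μs)` to `b` gives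
`‖R(μk) b‖₁ = μs + (μk - μs) ‖R(μk) R(μs) b‖₁`, which is the claim rearranged.
-/

open Matrix Set

/-- ℓ¹ norm of a vector in ℝⁿ. -/
noncomputable def l1 {n : ℕ} (x : Fin n → ℝ) : ℝ := ∑ i, |x i|

/-- Induced operator 1-norm of a real matrix (maximum column sum). -/
noncomputable def op1 {n : ℕ} (A : Matrix (Fin n) (Fin n) ℝ) : ℝ := ⨆ j, ∑ i, |A i j|

namespace Matrix

theorem inv_sub_smul_one_sub_inv_sub_smul_one {ι α : Type*} [Fintype ι] [DecidableEq ι]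
    [CommRing α] (A : Matrix ι ι α) {a b : α} (ha : IsUnit (A - a • 1))
    (hb : IsUnit (A - b • 1)) :
    (A - a • 1)⁻¹ - (A - b • 1)⁻¹ = (a - b) • ((A - a • 1)⁻¹ * (A - b • 1)⁻¹) := by
  rw [inv_sub_inv (iff_of_true ha hb), sub_sub_sub_cancel_left, ← sub_smul, Matrix.mul_smul,
    mul_one, smul_mul]

variable {ι K : Type*} [Fintype ι] [DecidableEq ι] [Field K] [LinearOrder K]
  [IsStrictOrderedRing K]

def IsInversePositive (A : Matrix ι ι K) : Prop :=
  ∀ x : ι → K, 0 ≤ A *ᵥ x → 0 ≤ x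

namespace IsInversePositive

variable {A : Matrix ι ι K}

theorem isUnit (hA : A.IsInversePositive) : IsUnit A := by
  refine mulVec_injective_iff_isUnit.1 fun x y hxy => le_antisymm ?_ ?_ <;>
    rw [← sub_nonneg] <;> refine hA _ ?_ <;> simp [mulVec_sub, hxy]

theorem inv_mulVec_nonneg (hA : A.IsInversePositive) {v : ι → K} (hv : 0 ≤ v) :
    0 ≤ A⁻¹ *ᵥ v :=
  hA _ <| by rwa [mulVec_mulVec, mul_nonsing_inv _ ((isUnit_iff_isUnit_det A).1 hA.isUnit),
    one_mulVec]

end IsInversePositive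

/-- The negative part `m = min x 0` satisfies `M m ≤ c m` entrywise; summing over all entries
and using that every column sum of `M` is below `c` forces `m = 0`. -/
theorem isInversePositive_smul_one_sub {M : Matrix ι ι K} (hM : ∀ i j, 0 ≤ M i j) {c : K}
    (hcol : ∀ j, ∑ i, M i j < c) : (c • (1 : Matrix ι ι K) - M).IsInversePositive := by
  intro x hx
  set m : ι → K := fun i => min (x i) 0
  have hm : ∀ i, ∑ j, M i j * m j ≤ c * m i := by
    intro i
    have hxi : ∑ j, M i j * x j ≤ c * x i := by
      have := hx i
      rw [sub_mulVec, smul_mulVec, one_mulVec] at this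
      simpa [mulVec, dotProduct, sub_nonneg] using this
    have hMm : ∑ j, M i j * m j ≤ ∑ j, M i j * x j :=
      Finset.sum_le_sum fun j _ => mul_le_mul_of_nonneg_left (min_le_left _ _) (hM i j)
    rcases lt_or_ge (x i) 0 with hxi0 | hxi0
    · simpa [m, hxi0.le] using hMm.trans hxi
    · simpa [m, hxi0] using Finset.sum_nonpos fun j _ =>
        mul_nonpos_of_nonneg_of_nonpos (hM i j) (min_le_right (x j) 0)
  by_contra hneg
  obtain ⟨k, hk⟩ : ∃ k, x k < 0 := by simpa [Pi.le_def] using hneg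
  have hlt : ∑ j, c * m j < ∑ j, (∑ i, M i j) * m j :=
    Finset.sum_lt_sum (fun j _ => mul_le_mul_of_nonpos_right (hcol j).le (min_le_right _ _))
      ⟨k, Finset.mem_univ _, mul_lt_mul_of_neg_right (hcol k) (by simp [m, hk])⟩
  have hle : ∑ j, (∑ i, M i j) * m j ≤ ∑ i, c * m i := by
    simp_rw [Finset.sum_mul]
    rw [Finset.sum_comm]
    exact Finset.sum_le_sum fun i _ => hm i
  exact (hlt.trans_le hle).false

end Matrix

section

variable {n : ℕ}

theorem l1_eq_sum_of_nonneg {x : Fin n → ℝ} (hx : 0 ≤ x) : l1 x = ∑ i, x i :=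
  Finset.sum_congr rfl fun i _ => abs_of_nonneg (hx i)

theorem l1_add_smul_of_nonneg {x y : Fin n → ℝ} {t : ℝ} (hx : 0 ≤ x) (hy : 0 ≤ y)
    (hxy : 0 ≤ x + t • y) : l1 (x + t • y) = l1 x + t * l1 y := by
  simp only [l1_eq_sum_of_nonneg, hx, hy, hxy, Pi.add_apply, Pi.smul_apply, smul_eq_mul,
    Finset.sum_add_distrib, Finset.mul_sum]

theorem sum_abs_le_op1 (M : Matrix (Fin n) (Fin n) ℝ) (j : Fin n) : ∑ i, |M i j| ≤ op1 M :=
  le_ciSup (f := fun j => ∑ i, |M i j|) (Set.finite_range _).bddAbove j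

end

theorem stmt_13_general {n : ℕ} (M : Matrix (Fin n) (Fin n) ℝ) (hM : ∀ i j, 0 ≤ M i j)
    (σ β : ℝ) (hσ : σ = op1 M) (hσ1 : σ < 1) (hβ : β = 1 - σ)
    (A : Matrix (Fin n) (Fin n) ℝ) (hA : A = (2 - σ) • (1 : Matrix (Fin n) (Fin n) ℝ) - M)
    (b : Fin n → ℝ) (hb : ∀ i, 0 ≤ b i)
    (μk μs : ℝ) (hμk : μk ∈ Icc (0 : ℝ) β) (hμs : μs ∈ Icc (0 : ℝ) β)
    (hfix : μs = l1 ((A - μs • 1)⁻¹.mulVec b)) :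
    l1 ((A - μk • 1)⁻¹.mulVec b) - μk =
      (l1 ((A - μk • 1)⁻¹.mulVec ((A - μs • 1)⁻¹.mulVec b)) - 1) * (μk - μs) := by
  have hpos : ∀ μ ∈ Icc (0 : ℝ) β, (A - μ • 1).IsInversePositive := by
    intro μ hμ
    rw [hA, sub_right_comm, ← sub_smul]
    refine isInversePositive_smul_one_sub hM fun j => ?_
    have hcol : ∑ i, M i j ≤ σ := by
      simpa only [hσ, abs_of_nonneg (hM _ j)] using sum_abs_le_op1 M j
    linarith [hμ.2]
  have hk := hpos μk hμk
  have hs := hpos μs hμs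
  set xs := (A - μs • 1)⁻¹ *ᵥ b
  have hxs : 0 ≤ xs := hs.inv_mulVec_nonneg hb
  have hres : (A - μk • 1)⁻¹ *ᵥ b = xs + (μk - μs) • (A - μk • 1)⁻¹ *ᵥ xs := by
    rw [mulVec_mulVec, ← smul_mulVec, ← add_mulVec, ← sub_eq_iff_eq_add'.1
      (inv_sub_smul_one_sub_inv_sub_smul_one A hk.isUnit hs.isUnit)]
  rw [hres, l1_add_smul_of_nonneg hxs (hk.inv_mulVec_nonneg hxs)
    (hres ▸ hk.inv_mulVec_nonneg hb), ← hfix]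
  ring

/-- Identity (3.14): for `μ_k ≤ μ*` in `[0,β]` with `μ* = ‖(A-μ*I)⁻¹b‖₁`,
`g(μ_k) = (‖(A-μ_kI)⁻¹(A-μ*I)⁻¹b‖₁ - 1)(μ_k - μ*)` where
`g(μ) = ‖(A-μI)⁻¹b‖₁ - μ`. -/
theorem stmt_13 {n : ℕ} (M : Matrix (Fin n) (Fin n) ℝ) (hM : ∀ i j, 0 ≤ M i j)
    (σ β : ℝ) (hσ : σ = op1 M) (hσ1 : σ < 1) (hβ : β = 1 - σ)
    (A : Matrix (Fin n) (Fin n) ℝ) (hA : A = (2 - σ) • (1 : Matrix (Fin n) (Fin n) ℝ) - M)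
    (b : Fin n → ℝ) (hb : ∀ i, 0 ≤ b i) (hb1 : l1 b < β ^ 2)
    (μk μs : ℝ) (hμk : μk ∈ Icc (0 : ℝ) β) (hμs : μs ∈ Icc (0 : ℝ) β)
    (hle : μk ≤ μs) (hfix : μs = l1 ((A - μs • 1)⁻¹.mulVec b)) :
    l1 ((A - μk • 1)⁻¹.mulVec b) - μk =
      (l1 ((A - μk • 1)⁻¹.mulVec ((A - μs • 1)⁻¹.mulVec b)) - 1) * (μk - μs) :=
  stmt_13_general M hM σ β hσ hσ1 hβ A hA b hb μk μs hμk hμs hfix
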